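/- arXiv:2504.01322 — 6 statements merged into one kernel-verified Lean document; each statement's English description precedes it below -/
import Mathlib

section
/- Let b0, b1, b2 be real numbers with b1 = b0 + 1, b1 ≠ 0 and b2 > 0. Define δ = b1^2*(b1^2 - 4*b0) + 4*b2^2 and Ω₋ = (-b1^2 - sqrt(δ))/(2*b2). Then δ ≥ 0 and |Ω₋| > 1. -/
/-!
Since `b1 = b0 + 1`, the factor `b1 ^ 2 - 4 * b0` is the square `(b1 - 2) ^ 2`, so `δ` is
`4 * b2 ^ 2` plus a square. Hence `√δ ≥ 2 * b2`, and as `b1 ^ 2 > 0` the numerator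
`-b1 ^ 2 - √δ` lies strictly below `-2 * b2`, i.e. `Ω₋ < -1`.
-/

lemma sq_sub_four_mul_eq_sq_of_eq_add_one {b0 b1 : ℝ} (h : b1 = b0 + 1) :
    b1 ^ 2 - 4 * b0 = (b1 - 2) ^ 2 := by
  subst h; ring

lemma two_mul_le_sqrt_add_four_mul_sq {s : ℝ} (hs : 0 ≤ s) (c : ℝ) :
    2 * c ≤ Real.sqrt (s + 4 * c ^ 2) :=
  Real.le_sqrt_of_sq_le (by nlinarith)

lemma neg_sub_sqrt_div_lt_neg_one {a s c : ℝ} (ha : 0 < a) (hs : 0 ≤ s) (hc : 0 < c) :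
    (-a - Real.sqrt (s + 4 * c ^ 2)) / (2 * c) < -1 := by
  have hsqrt := two_mul_le_sqrt_add_four_mul_sq hs c
  rw [div_lt_iff₀ (by positivity)]
  linarith

theorem stmt_2 (b0 b1 b2 : ℝ) (h : b1 = b0 + 1) (hb1 : b1 ≠ 0) (hb2 : 0 < b2)
    (δ : ℝ) (hδ : δ = b1 ^ 2 * (b1 ^ 2 - 4 * b0) + 4 * b2 ^ 2)
    (Ωm : ℝ) (hΩ : Ωm = (-b1 ^ 2 - Real.sqrt δ) / (2 * b2)) :
    δ ≥ 0 ∧ |Ωm| > 1 := by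
  rw [sq_sub_four_mul_eq_sq_of_eq_add_one h] at hδ
  have hΩ_lt : Ωm < -1 := by
    rw [hΩ, hδ]
    exact neg_sub_sqrt_div_lt_neg_one (by positivity) (by positivity) hb2
  exact ⟨by rw [hδ]; positivity, lt_abs.mpr (Or.inr (by linarith))⟩
end

section
/- Let b0, b1, b2 be real numbers with b1 = b0 + 1, b1 ≠ 0, b2 > 0, and b0^2 - b2^2 < 0. Define δ = b1^2*(b1^2 - 4*b0) + 4*b2^2 and Ω₊ = (-b1^2 + sqrt(δ))/(2*b2). Then |Ω₊| < 1. -/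
/-! With `a = b₁²` and `k = |b₂|` we have `δ = a² - 4b₀a + 4k²`, and
`(a + 2k)² - δ = 4a(k + b₀)`, `δ - (a - 2k)² = 4a(k - b₀)`. So `|b₀| < k` puts `√δ` strictly
between `a - 2k` and `a + 2k`, i.e. `|√δ - b₁²| < |2b₂|`. -/

theorem abs_sqrt_sub_lt {a b k : ℝ} (ha : 0 < a) (hb : |b| < k) :
    |√(a ^ 2 - 4 * b * a + 4 * k ^ 2) - a| < 2 * k := by
  obtain ⟨hb_lo, hb_hi⟩ := abs_lt.mp hb
  have hlower : a - 2 * k < √(a ^ 2 - 4 * b * a + 4 * k ^ 2) :=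
    Real.lt_sqrt_of_sq_lt (by nlinarith)
  have hupper : √(a ^ 2 - 4 * b * a + 4 * k ^ 2) < a + 2 * k :=
    (Real.sqrt_lt' (by linarith)).mpr (by nlinarith)
  exact abs_lt.mpr ⟨by linarith, by linarith⟩

theorem stmt_3_general (b0 b1 b2 : ℝ) (hb1 : b1 ≠ 0)
    (hlt : b0 ^ 2 - b2 ^ 2 < 0)
    (δ : ℝ) (hδ : δ = b1 ^ 2 * (b1 ^ 2 - 4 * b0) + 4 * b2 ^ 2)
    (Ωp : ℝ) (hΩ : Ωp = (-b1 ^ 2 + Real.sqrt δ) / (2 * b2)) :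
    |Ωp| < 1 := by
  have hb0 : |b0| < |b2| := sq_lt_sq.mp (by linarith)
  have hb2 : 0 < |b2| := (abs_nonneg b0).trans_lt hb0
  have hδ' : δ = (b1 ^ 2) ^ 2 - 4 * b0 * b1 ^ 2 + 4 * |b2| ^ 2 := by
    rw [hδ, sq_abs]; ring
  rw [hΩ, abs_div, abs_mul, abs_two, div_lt_one (by linarith), neg_add_eq_sub, hδ']
  exact abs_sqrt_sub_lt (by positivity) hb0

theorem stmt_3 (b0 b1 b2 : ℝ) (h : b1 = b0 + 1) (hb1 : b1 ≠ 0) (hb2 : 0 < b2)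
    (hlt : b0 ^ 2 - b2 ^ 2 < 0)
    (δ : ℝ) (hδ : δ = b1 ^ 2 * (b1 ^ 2 - 4 * b0) + 4 * b2 ^ 2)
    (Ωp : ℝ) (hΩ : Ωp = (-b1 ^ 2 + Real.sqrt δ) / (2 * b2)) :
    |Ωp| < 1 :=
  stmt_3_general b0 b1 b2 hb1 hlt δ hδ Ωp hΩ
end

section
/- Let b0, b1, b2 be real numbers with b1 = b0 + 1, b1 ≠ 0, b2 > 0, and b0^2 - b2^2 > 0. Define δ = b1^2*(b1^2 - 4*b0) + 4*b2^2 and Ω₊ = (-b1^2 + sqrt(δ))/(2*b2). Then |Ω₊| > 1. -/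
/-!
Ω₊ is the larger root of `p(Ω) = b2 Ω² + b1² Ω + (b0 b1² - b2²) / b2`, and `p(±1) = b1² (b0 ± b2) / b2`.
Since `b0² > b2²`, the numbers `b0 - b2` and `b0 + b2` have the same sign. If `b0 < -b2`, then `p(1) < 0`,
so `1` lies strictly between the roots and `Ω₊ > 1`. If `b0 > b2 > 0`, then `p(-1) > 0` and the vertex
`-b1² / (2 b2)` lies left of `-1` (as `b1² > (b2 + 1)² > 2 b2`), so both roots lie left of `-1`.
-/

section QuadraticRoot

variable {a b c t : ℝ}

theorem lt_quadratic_root_of_eval_neg (ha : 0 < a) (ht : a * t ^ 2 + b * t + c < 0) :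
    t < (-b + √(b ^ 2 - 4 * a * c)) / (2 * a) := by
  have hsqrt : 2 * a * t + b < √(b ^ 2 - 4 * a * c) :=
    Real.lt_sqrt_of_sq_lt (by nlinarith)
  rw [lt_div_iff₀ (by positivity)]
  linarith

theorem quadratic_root_lt_of_eval_pos (ha : 0 < a) (hvertex : 0 < 2 * a * t + b)
    (ht : 0 < a * t ^ 2 + b * t + c) :
    (-b + √(b ^ 2 - 4 * a * c)) / (2 * a) < t := by
  have hsqrt : √(b ^ 2 - 4 * a * c) < 2 * a * t + b :=
    (Real.sqrt_lt' hvertex).mpr (by nlinarith)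
  rw [div_lt_iff₀ (by positivity)]
  linarith

end QuadraticRoot

theorem stmt_4 (b0 b1 b2 : ℝ) (h : b1 = b0 + 1) (hb1 : b1 ≠ 0) (hb2 : 0 < b2)
    (hgt : b0 ^ 2 - b2 ^ 2 > 0)
    (δ : ℝ) (hδ : δ = b1 ^ 2 * (b1 ^ 2 - 4 * b0) + 4 * b2 ^ 2)
    (Ωp : ℝ) (hΩ : Ωp = (-b1 ^ 2 + Real.sqrt δ) / (2 * b2)) :
    |Ωp| > 1 := by
  set c := (b0 * b1 ^ 2 - b2 ^ 2) / b2 with hc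
  have hΩ' : Ωp = (-b1 ^ 2 + √((b1 ^ 2) ^ 2 - 4 * b2 * c)) / (2 * b2) := by
    rw [hΩ, hδ]; congr 3; rw [hc]; field_simp; ring
  have hb2b0 : b2 < |b0| := by
    rw [← abs_of_pos hb2, ← sq_lt_sq]; linarith
  rcases lt_abs.mp hb2b0 with hb0_pos | hb0_neg
  · have hroot : Ωp < -1 := by
      rw [hΩ']
      refine quadratic_root_lt_of_eval_pos hb2 (by nlinarith) ?_
      have hp : b2 * (-1) ^ 2 + b1 ^ 2 * (-1) + c = b1 ^ 2 * (b0 - b2) / b2 := by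
        rw [hc]; field_simp; ring
      rw [hp]; positivity
    exact lt_abs.mpr (Or.inr (by linarith))
  · have hroot : 1 < Ωp := by
      rw [hΩ']
      refine lt_quadratic_root_of_eval_neg hb2 ?_
      have hp : b2 * 1 ^ 2 + b1 ^ 2 * 1 + c = b1 ^ 2 * (b0 + b2) / b2 := by
        rw [hc]; field_simp; ring
      rw [hp]
      exact div_neg_of_neg_of_pos (mul_neg_of_pos_of_neg (by positivity) (by linarith)) hb2
    exact lt_abs.mpr (Or.inl hroot)
end

section
/- Let τ, γ0, ω0 > 0 and b0, b1, b2 real with b1 = b0 + 1, and suppose M(λ,γ0) = λ^2 + γ0 b1 λ + γ0^2 b0 + γ0^2 b2 e^{-2τλ} has iω0 as a root. Then iω0 is a simple root of M(·, γ0), i.e., the derivative dM/dλ(iω0, γ0) = 2iω0 + γ0 b1 - 2τγ0^2 b2 e^{-2τ i ω0} is nonzero. -/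
open Complex

theorem Complex.quadratic_ne_zero_of_discrim_nonneg {a b c : ℝ} (ha : a ≠ 0)
    (hd : 0 ≤ discrim a b c) {z : ℂ} (hz : z.im ≠ 0) :
    (a : ℂ) * z ^ 2 + b * z + c ≠ 0 := by
  intro hzero
  have hre := congrArg re hzero
  have him := congrArg im hzero
  simp only [add_re, add_im, mul_re, mul_im, ofReal_re, ofReal_im, pow_two, zero_re, zero_im]
    at hre him
  have hb : b = -2 * a * z.re := by
    apply mul_right_cancel₀ hz
    linarith
  have hc : c = a * (z.re ^ 2 + z.im ^ 2) := by
    subst hb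
    linarith
  have hdisc : discrim a b c = -4 * a ^ 2 * z.im ^ 2 := by
    rw [discrim, hb, hc]
    ring
  have hpos : 0 < a ^ 2 * z.im ^ 2 := by positivity
  linarith

theorem stmt_8_general (τ γ0 ω0 b0 b1 b2 : ℝ) (hτ : 0 < τ) (hω0 : 0 < ω0)
    (h : b1 = b0 + 1)
    (hroot : (I * ω0) ^ 2 + (γ0 : ℂ) * b1 * (I * ω0) + (γ0 : ℂ) ^ 2 * b0 +
      (γ0 : ℂ) ^ 2 * b2 * Complex.exp (-2 * τ * (I * ω0)) = 0) :
    2 * (I * ω0) + (γ0 : ℂ) * b1 -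
      2 * τ * (γ0 : ℂ) ^ 2 * b2 * Complex.exp (-2 * τ * (I * ω0)) ≠ 0 := by
  intro hder
  -- `dM/dλ + 2τ M` no longer contains the exponential: it is a real quadratic in `iω0`.
  have hquad : ((2 * τ : ℝ) : ℂ) * (I * ω0) ^ 2 + ((2 * (1 + τ * γ0 * b1) : ℝ) : ℂ) * (I * ω0)
      + ((γ0 * (b1 + 2 * τ * γ0 * b0) : ℝ) : ℂ) = 0 := by
    push_cast
    linear_combination hder + 2 * (τ : ℂ) * hroot
  have hdiscrim : discrim (2 * τ) (2 * (1 + τ * γ0 * b1)) (γ0 * (b1 + 2 * τ * γ0 * b0))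
      = 4 + 4 * (τ * γ0 * (b1 - 2)) ^ 2 := by
    rw [discrim, h]
    ring
  refine quadratic_ne_zero_of_discrim_nonneg (by positivity) ?_ ?_ hquad
  · rw [hdiscrim]
    positivity
  · simpa using hω0.ne'

theorem stmt_8 (τ γ0 ω0 b0 b1 b2 : ℝ) (hτ : 0 < τ) (hγ0 : 0 < γ0) (hω0 : 0 < ω0)
    (h : b1 = b0 + 1)
    (hroot : (I * ω0) ^ 2 + (γ0 : ℂ) * b1 * (I * ω0) + (γ0 : ℂ) ^ 2 * b0 +
      (γ0 : ℂ) ^ 2 * b2 * Complex.exp (-2 * τ * (I * ω0)) = 0) :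
    2 * (I * ω0) + (γ0 : ℂ) * b1 -
      2 * τ * (γ0 : ℂ) ^ 2 * b2 * Complex.exp (-2 * τ * (I * ω0)) ≠ 0 :=
  stmt_8_general τ γ0 ω0 b0 b1 b2 hτ hω0 h hroot
end

section
/- Let γ0, ω0 > 0 and b0, b1, b2 real with b1 = b0 + 1. Suppose both iω0 and n·iω0, for some integer n with |n| ≠ 1, satisfy |λ^2 + γ0 b1 λ + γ0^2 b0|^2 = γ0^4 b2^2 (equivalently, γ0^4 b2^2 = (ω^2 - γ0^2 b0)^2 + γ0^2 b1^2 ω^2 for ω = ω0 and ω = nω0). Then a contradiction follows; i.e., no integer multiple n iω0 with |n| ≠ 1 can also satisfy this modulus condition. -/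
/-!
Writing `F(ω) = (ω² - γ²b₀)² + γ²b₁²ω²`, one has
`F(x) - F(y) = (x² - y²)(x² + y² + γ²(b₁² - 2b₀))`, and `b₁² - 2b₀ = b₀² + 1 > 0` when `b₁ = b₀ + 1`.
So `F` determines `ω²`, and `F(nω₀) = F(ω₀)` with `ω₀ ≠ 0` forces `n² = 1`.
-/

/-- `|λ² + γ b₁ λ + γ² b₀|²` at `λ = iω`. -/
def charModulusSq (γ b0 b1 ω : ℝ) : ℝ :=
  (ω ^ 2 - γ ^ 2 * b0) ^ 2 + γ ^ 2 * b1 ^ 2 * ω ^ 2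

theorem charModulusSq_sub (γ b0 b1 x y : ℝ) :
    charModulusSq γ b0 b1 x - charModulusSq γ b0 b1 y =
      (x ^ 2 - y ^ 2) * (x ^ 2 + y ^ 2 + γ ^ 2 * (b1 ^ 2 - 2 * b0)) := by
  unfold charModulusSq
  ring

theorem sq_eq_sq_of_charModulusSq_eq {γ b0 b1 x y : ℝ} (hb : 2 * b0 ≤ b1 ^ 2)
    (hxy : charModulusSq γ b0 b1 x = charModulusSq γ b0 b1 y) : x ^ 2 = y ^ 2 := by
  have hprod := charModulusSq_sub γ b0 b1 x y
  rw [hxy, sub_self, eq_comm, mul_eq_zero] at hprod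
  rcases hprod with hsq | hsum
  · exact sub_eq_zero.mp hsq
  · have hx : 0 ≤ x ^ 2 := sq_nonneg x
    have hy : 0 ≤ y ^ 2 := sq_nonneg y
    have hc : 0 ≤ γ ^ 2 * (b1 ^ 2 - 2 * b0) := mul_nonneg (sq_nonneg γ) (by linarith)
    linarith

theorem stmt_9_general (γ0 ω0 b0 b1 b2 : ℝ) (hω0 : 0 < ω0)
    (h : b1 = b0 + 1) (n : ℤ) (hn : |n| ≠ 1)
    (h1 : γ0 ^ 4 * b2 ^ 2 = (ω0 ^ 2 - γ0 ^ 2 * b0) ^ 2 + γ0 ^ 2 * b1 ^ 2 * ω0 ^ 2)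
    (h2 : γ0 ^ 4 * b2 ^ 2 =
      ((n : ℝ) ^ 2 * ω0 ^ 2 - γ0 ^ 2 * b0) ^ 2 + γ0 ^ 2 * b1 ^ 2 * (n : ℝ) ^ 2 * ω0 ^ 2) :
    False := by
  have hb : 2 * b0 ≤ b1 ^ 2 := by nlinarith [sq_nonneg b0]
  have hF : charModulusSq γ0 b0 b1 (n * ω0) = charModulusSq γ0 b0 b1 ω0 := by
    unfold charModulusSq
    linear_combination h1 - h2
  have hnω : (n : ℝ) ^ 2 * ω0 ^ 2 = 1 * ω0 ^ 2 := by
    rw [← mul_pow, one_mul]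
    exact sq_eq_sq_of_charModulusSq_eq hb hF
  have hnR : (n : ℝ) ^ 2 = 1 := mul_right_cancel₀ (pow_ne_zero 2 hω0.ne') hnω
  have hnZ : n ^ 2 = 1 ^ 2 := by exact_mod_cast hnR
  exact hn (by simpa using (sq_eq_sq_iff_abs_eq_abs n 1).mp hnZ)

theorem stmt_9 (γ0 ω0 b0 b1 b2 : ℝ) (hγ0 : 0 < γ0) (hω0 : 0 < ω0)
    (h : b1 = b0 + 1) (n : ℤ) (hn : |n| ≠ 1)
    (h1 : γ0 ^ 4 * b2 ^ 2 = (ω0 ^ 2 - γ0 ^ 2 * b0) ^ 2 + γ0 ^ 2 * b1 ^ 2 * ω0 ^ 2)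
    (h2 : γ0 ^ 4 * b2 ^ 2 =
      ((n : ℝ) ^ 2 * ω0 ^ 2 - γ0 ^ 2 * b0) ^ 2 + γ0 ^ 2 * b1 ^ 2 * (n : ℝ) ^ 2 * ω0 ^ 2) :
    False :=
  stmt_9_general γ0 ω0 b0 b1 b2 hω0 h n hn h1 h2
end

section
/- Let s0 > 1, γ0, ω0 > 0, b0, b1 real with b1 = b0 + 1, and let C be the 2×2 real matrix with entries C₁₁ = (b1+2)ω0², C₁₂ = -[(b1+2)γ0ω0 + (s0+1)((b0+b1)γ0²ω0 - ω0³)], C₂₁ = (2ω0²/γ0 - b1γ0)ω0, C₂₂ = b1γ0² - 2ω0² + (s0+1)((-b1-1)γ0ω0² + b0γ0³). Then det C = -ω0²(s0+1)[(b0²+3)γ0ω0² + (b0²+1)γ0³ + 2ω0⁴/γ0] < 0; in particular C is invertible. -/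
noncomputable def solvabilityMatrix (s0 γ0 ω0 b0 b1 : ℝ) : Matrix (Fin 2) (Fin 2) ℝ :=
  !![(b1 + 2) * ω0 ^ 2,
     -((b1 + 2) * γ0 * ω0 + (s0 + 1) * ((b0 + b1) * γ0 ^ 2 * ω0 - ω0 ^ 3));
     (2 * ω0 ^ 2 / γ0 - b1 * γ0) * ω0,
     b1 * γ0 ^ 2 - 2 * ω0 ^ 2 + (s0 + 1) * ((-b1 - 1) * γ0 * ω0 ^ 2 + b0 * γ0 ^ 3)]

theorem solvabilityMatrix_det (s0 γ0 ω0 b0 : ℝ) (hγ0 : γ0 ≠ 0) :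
    (solvabilityMatrix s0 γ0 ω0 b0 (b0 + 1)).det = -(ω0 ^ 2) * (s0 + 1) *
      ((b0 ^ 2 + 3) * γ0 * ω0 ^ 2 + (b0 ^ 2 + 1) * γ0 ^ 3 + 2 * ω0 ^ 4 / γ0) := by
  rw [solvabilityMatrix, Matrix.det_fin_two_of]
  field_simp
  ring

theorem stmt_16 (s0 γ0 ω0 b0 b1 : ℝ) (hs0 : 1 < s0) (hγ0 : 0 < γ0) (hω0 : 0 < ω0)
    (h : b1 = b0 + 1)
    (C : Matrix (Fin 2) (Fin 2) ℝ)
    (hC : C = !![(b1 + 2) * ω0 ^ 2,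
                 -((b1 + 2) * γ0 * ω0 + (s0 + 1) * ((b0 + b1) * γ0 ^ 2 * ω0 - ω0 ^ 3));
                 (2 * ω0 ^ 2 / γ0 - b1 * γ0) * ω0,
                 b1 * γ0 ^ 2 - 2 * ω0 ^ 2 + (s0 + 1) * ((-b1 - 1) * γ0 * ω0 ^ 2 + b0 * γ0 ^ 3)]) :
    C.det = -(ω0 ^ 2) * (s0 + 1) *
        ((b0 ^ 2 + 3) * γ0 * ω0 ^ 2 + (b0 ^ 2 + 1) * γ0 ^ 3 + 2 * ω0 ^ 4 / γ0) ∧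
      C.det < 0 ∧ IsUnit C.det := by
  have hdet : C.det = -(ω0 ^ 2) * (s0 + 1) *
      ((b0 ^ 2 + 3) * γ0 * ω0 ^ 2 + (b0 ^ 2 + 1) * γ0 ^ 3 + 2 * ω0 ^ 4 / γ0) := by
    subst h hC
    exact solvabilityMatrix_det s0 γ0 ω0 b0 hγ0.ne'
  have hneg : C.det < 0 := by
    have hs : 0 < s0 + 1 := by linarith
    rw [hdet]
    refine mul_neg_of_neg_of_pos (mul_neg_of_neg_of_pos ?_ hs) (by positivity)
    exact neg_neg_of_pos (by positivity)
  exact ⟨hdet, hneg, hneg.ne.isUnit⟩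
end
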